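/- arXiv:math/0005165 — 2 statements merged into one kernel-verified Lean document; each statement's English description precedes it below -/
import Mathlib

section
/- For every f ∈ A = ℂ⟨x,y⟩, every n ≥ 1 and all X, Y, A', B' ∈ M_n(ℂ), the derivative at t = 0 of the polynomial map t ↦ Trace( f(X + tA', Y + tB') ) equals Trace( (∂f/∂x)(X,Y) · A' ) + Trace( (∂f/∂y)(X,Y) · B' ), where ∂f/∂x, ∂f/∂y ∈ A are the cyclic derivatives of f and (∂f/∂x)(X,Y) denotes their evaluation at (X,Y). -/
/- STATEMENT 11: For f ∈ A = ℂ⟨x,y⟩, n ≥ 1 and X, Y, A', B' ∈ M_n(ℂ), the derivative at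
t = 0 of t ↦ Trace(f(X + tA', Y + tB')) equals
Trace((∂f/∂x)(X,Y)·A') + Trace((∂f/∂y)(X,Y)·B'), with ∂f/∂x, ∂f/∂y the cyclic
derivatives.

A = ℂ⟨x,y⟩ is modelled as `FreeAlgebra ℂ (Fin 2)`, x the generator `0`, y the
generator `1`. -/

noncomputable section

open scoped BigOperators

/-- The word (monomial) in `ℂ⟨x,y⟩` associated to a list of letters. -/
def wordProd (w : List (Fin 2)) : FreeAlgebra ℂ (Fin 2) :=
  (w.map fun z => FreeAlgebra.ι ℂ z).prod

/-- The list obtained from `w` by deleting the entry at position `i` and cyclically rotating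
so that the entries after position `i` come first. -/
def rotAt (w : List (Fin 2)) (i : ℕ) : List (Fin 2) :=
  w.drop (i + 1) ++ w.take i

/-- Evaluation `f ↦ f(X,Y)`: the unital algebra homomorphism `ℂ⟨x,y⟩ → M_n(ℂ)`
sending x ↦ X, y ↦ Y, applied to f. -/
def evalM {n : ℕ} (X Y : Matrix (Fin n) (Fin n) ℂ) (f : FreeAlgebra ℂ (Fin 2)) :
    Matrix (Fin n) (Fin n) ℂ :=
  FreeAlgebra.lift ℂ ![X, Y] f

/-
Both sides are ℂ-linear in `f`, so it suffices to treat a word `w = z₁ ⋯ z_k`. By the Leibniz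
rule, `t ↦ ∏ᵢ (M zᵢ + t • N zᵢ)` has derivative `∑ⱼ (∏_{i<j} M zᵢ) * N zⱼ * (∏_{i>j} M zᵢ)` at
`0`, and cyclicity of the trace turns the `j`-th term into `Trace ((rotAt w j)(M) * N zⱼ)`,
which is the contribution of the `j`-th letter to the cyclic derivative.
-/

open FreeAlgebra

lemma lift_wordProd {S : Type*} [Semiring S] [Algebra ℂ S] (g : Fin 2 → S) (w : List (Fin 2)) :
    lift ℂ g (wordProd w) = (w.map g).prod := by
  simp [wordProd, map_list_prod]

lemma span_range_wordProd : Submodule.span ℂ (Set.range wordProd) = ⊤ := by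
  have hwords : Set.range wordProd = Submonoid.closure (Set.range (ι ℂ : Fin 2 → _)) := by
    rw [← FreeMonoid.mrange_lift, MonoidHom.coe_mrange,
      ← FreeMonoid.toList.symm.surjective.range_comp]
    congr 1
    ext w
    simp [wordProd, FreeMonoid.lift_apply]
  rw [hwords, ← Algebra.adjoin_eq_span, adjoin_range_ι, Algebra.top_toSubmodule]

def IsCyclicDerivative (D : Fin 2 → FreeAlgebra ℂ (Fin 2) →ₗ[ℂ] FreeAlgebra ℂ (Fin 2)) : Prop :=
  ∀ z : Fin 2, ∀ w : List (Fin 2),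
    D z (wordProd w) = ∑ j : Fin w.length, if w.get j = z then wordProd (rotAt w j) else 0

theorem hasDerivAt_of_span_eq_top {𝕜 V F : Type*} [NontriviallyNormedField 𝕜] [AddCommGroup V]
    [Module 𝕜 V] [NormedAddCommGroup F] [NormedSpace 𝕜 F] {s : Set V}
    (hs : Submodule.span 𝕜 s = ⊤) (φ : V →ₗ[𝕜] 𝕜 → F) (ψ : V →ₗ[𝕜] F) {x : 𝕜}
    (h : ∀ v ∈ s, HasDerivAt (φ v) (ψ v) x) (v : V) : HasDerivAt (φ v) (ψ v) x := by
  induction (hs ▸ Submodule.mem_top : v ∈ Submodule.span 𝕜 s) using Submodule.span_induction with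
  | mem v hv => exact h v hv
  | zero => simp
  | add v w _ _ hv hw => simpa using hv.add hw
  | smul c v _ hv => simpa using hv.const_smul c

theorem hasDerivAt_list_prod_map_add_smul {𝕜 𝔸 α : Type*} [NontriviallyNormedField 𝕜]
    [NormedRing 𝔸] [NormedAlgebra 𝕜 𝔸] (M N : α → 𝔸) (l : List α) :
    HasDerivAt (fun t : 𝕜 => (l.map (M + t • N)).prod)
      (∑ j : Fin l.length, ((l.take j).map M).prod * N l[j] * ((l.drop (j + 1)).map M).prod)
      0 := by
  have h : ∀ z ∈ l, HasDerivAt (fun t : 𝕜 => (M + t • N) z) (N z) 0 := fun z _ =>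
    ((hasDerivAt_id (0 : 𝕜)).smul_const (N z)).const_add (M z) |>.congr_deriv (one_smul _ _)
  exact (HasFDerivAt.list_prod' fun z hz => (h z hz).hasFDerivAt).hasDerivAt.congr_deriv
    (by simp [mul_assoc])

section Matrix

variable {m : Type*} [Fintype m] [DecidableEq m]

lemma trace_lift_wordProd_rotAt_mul (M : Fin 2 → Matrix m m ℂ) (A : Matrix m m ℂ)
    (w : List (Fin 2)) (j : ℕ) :
    (lift ℂ M (wordProd (rotAt w j)) * A).trace =
      (((w.take j).map M).prod * A * ((w.drop (j + 1)).map M).prod).trace := by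
  rw [lift_wordProd, rotAt, List.map_append, List.prod_append, ← Matrix.trace_mul_cycle]

namespace IsCyclicDerivative

variable {D : Fin 2 → FreeAlgebra ℂ (Fin 2) →ₗ[ℂ] FreeAlgebra ℂ (Fin 2)}

lemma sum_trace_lift_mul (hD : IsCyclicDerivative D) (M N : Fin 2 → Matrix m m ℂ)
    (w : List (Fin 2)) :
    ∑ z, (lift ℂ M (D z (wordProd w)) * N z).trace =
      ∑ j : Fin w.length, (lift ℂ M (wordProd (rotAt w j)) * N w[j]).trace := by
  simp only [hD _ w, map_sum, Finset.sum_mul, Matrix.trace_sum]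
  rw [Finset.sum_comm]
  refine Finset.sum_congr rfl fun j _ => ?_
  simp [apply_ite (lift ℂ M), ite_mul, apply_ite Matrix.trace]

attribute [local instance] Matrix.frobeniusNormedAddCommGroup Matrix.frobeniusNormedRing
  Matrix.frobeniusNormedSpace Matrix.frobeniusNormedAlgebra

theorem hasDerivAt_trace_lift (hD : IsCyclicDerivative D) (M N : Fin 2 → Matrix m m ℂ)
    (f : FreeAlgebra ℂ (Fin 2)) :
    HasDerivAt (fun t : ℂ => (lift ℂ (M + t • N) f).trace)
      (∑ z, (lift ℂ M (D z f) * N z).trace) 0 := by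
  let φ : FreeAlgebra ℂ (Fin 2) →ₗ[ℂ] ℂ → ℂ := LinearMap.pi fun t =>
    Matrix.traceLinearMap m ℂ ℂ ∘ₗ (lift ℂ (M + t • N)).toLinearMap
  let ψ : FreeAlgebra ℂ (Fin 2) →ₗ[ℂ] ℂ := ∑ z, Matrix.traceLinearMap m ℂ ℂ ∘ₗ
    LinearMap.mulRight ℂ (N z) ∘ₗ (lift ℂ M).toLinearMap ∘ₗ D z
  have hφ : ∀ g, φ g = fun t => (lift ℂ (M + t • N) g).trace := fun _ => rfl
  have hψ : ∀ g, ψ g = ∑ z, (lift ℂ M (D z g) * N z).trace := fun _ => by simp [ψ]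
  refine hφ f ▸ hψ f ▸ hasDerivAt_of_span_eq_top span_range_wordProd φ ψ ?_ f
  rintro _ ⟨w, rfl⟩
  rw [hφ, hψ, hD.sum_trace_lift_mul]
  simp only [trace_lift_wordProd_rotAt_mul, ← Matrix.trace_sum]
  simp only [lift_wordProd]
  exact (Matrix.traceLinearMap m ℂ ℂ).toContinuousLinearMap.hasFDerivAt.comp_hasDerivAt 0
    (hasDerivAt_list_prod_map_add_smul M N w)

end IsCyclicDerivative

end Matrix

theorem ginzburg_trace_derivative_formula
    -- `D z` is the cyclic derivative ∂/∂z, determined ℂ-linearly by its values on words: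
    (D : Fin 2 → FreeAlgebra ℂ (Fin 2) →ₗ[ℂ] FreeAlgebra ℂ (Fin 2))
    (hD : ∀ z : Fin 2, ∀ w : List (Fin 2),
      D z (wordProd w) =
        ∑ j : Fin w.length, if w.get j = z then wordProd (rotAt w j) else 0) :
    ∀ f : FreeAlgebra ℂ (Fin 2), ∀ n : ℕ, 1 ≤ n →
      ∀ X Y A' B' : Matrix (Fin n) (Fin n) ℂ,
        deriv (fun t : ℂ => Matrix.trace (evalM (X + t • A') (Y + t • B') f)) 0 =
          Matrix.trace (evalM X Y (D 0 f) * A') +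
            Matrix.trace (evalM X Y (D 1 f) * B') := by
  intro f n _ X Y A' B'
  have h := IsCyclicDerivative.hasDerivAt_trace_lift hD ![X, Y] ![A', B'] f
  have hpath : ∀ t : ℂ, ![X, Y] + t • ![A', B'] = ![X + t • A', Y + t • B'] := fun t => by
    simp
  simp only [hpath, Fin.sum_univ_two] at h
  exact h.deriv
end
end

section
/- Let f ∈ A = ℂ⟨x,y⟩. If for every n ≥ 1 and all X, Y ∈ M_n(ℂ) one has Trace(f(X,Y)) = 0, then f ∈ [A,A], the span of commutators. (The key injectivity claim proved in Proposition 4.1 of the paper: the stabilized trace map tr_∞ is injective on A/[A,A] modulo constants.) -/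
/- STATEMENT 14 (key injectivity claim in Proposition 4.1 of the paper): Let
f ∈ A = ℂ⟨x,y⟩. If Trace(f(X,Y)) = 0 for every n ≥ 1 and all X, Y ∈ M_n(ℂ), then
f ∈ [A,A], the span of commutators.

A = ℂ⟨x,y⟩ is modelled as `FreeAlgebra ℂ (Fin 2)`, x the generator `0`, y the
generator `1`. -/

noncomputable section

/-- `[A,A]`: the ℂ-linear span of all commutators in `A = ℂ⟨x,y⟩`. -/
def commSpan : Submodule ℂ (FreeAlgebra ℂ (Fin 2)) :=
  Submodule.span ℂ {z | ∃ a b : FreeAlgebra ℂ (Fin 2), z = a * b - b * a}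

/- The words form a basis of `ℂ⟨x,y⟩`, and `uv - vu ∈ [A,A]` makes every word congruent to
each of its rotations. Hence `f = ∑ c_w w` lies in `[A,A]` once `c_∅ = 0` and, for every
nonempty word `u`, the sum of `c_w` over the `|u|` rotations `w` of `u` vanishes: `f` is then
congruent to its cyclic average, which is `0`.

Both conditions are read off traces. Replacing `X, Y` by `sX, sY` makes `tr f(sX, sY)` a
polynomial in `s`, so the trace of every homogeneous component of `f` vanishes; on `1 × 1`
matrices the degree-0 component is `c_∅`. For a word `u` of length `k` take the `k × k`
matrices `X_a` with entry `1` at `(i, i + 1 mod k)` whenever the `i`-th letter of `u` is `a`: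
for a word `v` of length `k`, `tr v(X)` counts the rotations of `u` equal to `v`, so the
degree-`k` component gives the cyclic sum. -/

open Finset Matrix Module

namespace List

variable {α : Type*} [DecidableEq α]

def rotationCount (u v : List α) : ℕ := #{j ∈ Finset.range u.length | u.rotate j = v}

lemma rotationCount_eq_zero_of_length_ne {u v : List α} (h : u.length ≠ v.length) :
    rotationCount u v = 0 :=
  card_eq_zero.2 <| filter_eq_empty_iff.2 fun j _ hj => h (by rw [← hj, List.length_rotate])

lemma rotationCount_comm (u v : List α) : rotationCount u v = rotationCount v u := by
  by_cases h : u.length = v.length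
  · unfold rotationCount
    rw [h]
    set k := v.length
    have h_inv : ∀ j < k, (k - (k - j) % k) % k = j := by
      intro j hj
      rcases j.eq_zero_or_pos with rfl | hj0
      · simp
      · rw [Nat.mod_eq_of_lt (show k - j < k by omega), Nat.sub_sub_self hj.le,
          Nat.mod_eq_of_lt hj]
    have h_rot : ∀ {x y : List α}, y.length = k → ∀ j < k,
        x.rotate j = y → y.rotate ((k - j) % k) = x := by
      intro x y hy j hj hxy
      rw [List.rotate_eq_iff, hy, Nat.mod_eq_of_lt hj] at hxy
      rw [← hy, List.rotate_mod, hy, hxy]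
    refine card_nbij' (fun j => (k - j) % k) (fun j => (k - j) % k) ?_ ?_ ?_ ?_ <;>
      simp only [Set.MapsTo, Set.LeftInvOn, Set.RightInvOn, coe_filter, Finset.mem_range,
        Set.mem_ofPred_eq] <;>
      intro j ⟨hj, hrot⟩
    · exact ⟨Nat.mod_lt _ (by omega), h_rot rfl j hj hrot⟩
    · exact ⟨Nat.mod_lt _ (by omega), h_rot h j hj hrot⟩
    · exact h_inv j hj
    · exact h_inv j hj
  · rw [rotationCount_eq_zero_of_length_ne h, rotationCount_eq_zero_of_length_ne (Ne.symm h)]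

end List

section PathMatrix

variable {ι α : Type*} (R : Type*)

def pathWord (g : ι → α) (σ : ι → ι) (i : ι) (n : ℕ) : List α :=
  (List.range n).map fun t => g (σ^[t] i)

lemma pathWord_succ (g : ι → α) (σ : ι → ι) (i : ι) (n : ℕ) :
    pathWord g σ i (n + 1) = g i :: pathWord g σ (σ i) n := by
  simp [pathWord, List.range_succ_eq_map, Function.iterate_succ_apply]

variable [DecidableEq ι] [DecidableEq α] [Semiring R]

def labelMatrix (g : ι → α) (σ : ι → ι) (a : α) : Matrix ι ι R :=
  of fun i j => if g i = a ∧ σ i = j then 1 else 0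

variable {R} [Fintype ι]

lemma prod_map_labelMatrix_apply (g : ι → α) (σ : ι → ι) (v : List α) (i j : ι) :
    (v.map (labelMatrix R g σ)).prod i j =
      if pathWord g σ i v.length = v ∧ σ^[v.length] i = j then 1 else 0 := by
  induction v generalizing i with
  | nil => simp [pathWord, one_apply]
  | cons a v ih =>
    simp only [List.map_cons, List.prod_cons, mul_apply, labelMatrix, of_apply, ite_and,
      ite_mul, one_mul, zero_mul, ih, List.length_cons, pathWord_succ, List.cons.injEq,
      Function.iterate_succ_apply]
    by_cases ha : g i = a <;> simp [ha]

lemma trace_prod_map_labelMatrix (g : ι → α) (σ : ι → ι) (v : List α) :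
    trace (v.map (labelMatrix R g σ)).prod =
      ∑ i, if pathWord g σ i v.length = v ∧ σ^[v.length] i = i then 1 else 0 := by
  simp only [trace, Matrix.diag, prod_map_labelMatrix_apply]

end PathMatrix

section CyclicWord

variable {α R : Type*}

lemma val_finRotate_iterate {n : ℕ} (i : Fin n) (t : ℕ) :
    ((finRotate n)^[t] i : ℕ) = (i + t) % n := by
  induction t with
  | zero => exact (Nat.mod_eq_of_lt i.isLt).symm
  | succ t ih =>
    have := i.neZero
    rw [Function.iterate_succ_apply', finRotate_apply, Fin.val_add, ih, Fin.val_one',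
      ← Nat.add_mod, Nat.add_assoc]

lemma pathWord_get_finRotate (u : List α) (i : Fin u.length) :
    pathWord u.get (finRotate u.length) i u.length = u.rotate i := by
  refine List.ext_getElem (by simp [pathWord]) fun t ht _ => ?_
  simp [pathWord, List.getElem_rotate, val_finRotate_iterate, Nat.add_comm]

variable [DecidableEq α] [Semiring R]

lemma trace_prod_map_labelMatrix_get_finRotate (u v : List α) (hv : v.length = u.length) :
    trace (v.map (labelMatrix R u.get (finRotate u.length))).prod = u.rotationCount v := by
  have h_cycle : ∀ i : Fin u.length, (finRotate u.length)^[u.length] i = i := fun i =>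
    Fin.ext (by rw [val_finRotate_iterate, Nat.add_mod_right, Nat.mod_eq_of_lt i.isLt])
  simp only [trace_prod_map_labelMatrix, hv, pathWord_get_finRotate, h_cycle, and_true]
  rw [Fin.sum_univ_eq_sum_range (fun j => if u.rotate j = v then (1 : R) else 0), sum_boole,
    List.rotationCount]

end CyclicWord

def commutatorSpan (K A : Type*) [CommSemiring K] [Ring A] [Algebra K A] : Submodule K A :=
  Submodule.span K {z | ∃ a b : A, z = a * b - b * a}

lemma mul_sub_mul_mem_commutatorSpan {K A : Type*} [CommSemiring K] [Ring A] [Algebra K A]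
    (a b : A) : a * b - b * a ∈ commutatorSpan K A :=
  Submodule.subset_span ⟨a, b, rfl⟩

namespace FreeAlgebra

section CommSemiring

variable (K α : Type*) [CommSemiring K]

def wordBasis : Basis (List α) K (FreeAlgebra K α) :=
  (basisFreeMonoid K α).reindex FreeMonoid.toList

variable {K α}

lemma wordBasis_apply (l : List α) : wordBasis K α l = (l.map (ι K)).prod := by
  simp [wordBasis, basisFreeMonoid, equivMonoidAlgebraFreeMonoid]

lemma wordBasis_append (l₁ l₂ : List α) :
    wordBasis K α (l₁ ++ l₂) = wordBasis K α l₁ * wordBasis K α l₂ := by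
  simp [wordBasis_apply]

lemma lift_wordBasis {A : Type*} [Semiring A] [Algebra K A] (M : α → A) (l : List α) :
    lift K M (wordBasis K α l) = (l.map M).prod := by
  simp [wordBasis_apply, map_list_prod]

lemma lift_smul_wordBasis {A : Type*} [Semiring A] [Algebra K A] (M : α → A) (s : K)
    (l : List α) :
    lift K (s • M) (wordBasis K α l) = s ^ l.length • lift K M (wordBasis K α l) := by
  simp only [lift_wordBasis]
  induction l with
  | nil => simp
  | cons a l ih => simp [ih, pow_succ, smul_smul, mul_comm]

lemma trace_lift_eq_finsuppSum {n : Type*} [Fintype n] [DecidableEq n] (M : α → Matrix n n K)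
    (f : FreeAlgebra K α) :
    trace (lift K M f) =
      ((wordBasis K α).repr f).sum fun l a => a * trace (lift K M (wordBasis K α l)) := by
  conv_lhs => rw [← (wordBasis K α).linearCombination_repr f]
  simp [Finsupp.linearCombination_apply, Finsupp.sum, trace_sum]

end CommSemiring

lemma wordBasis_sub_wordBasis_rotate_mem {K α : Type*} [CommRing K] (l : List α) (j : ℕ) :
    wordBasis K α l - wordBasis K α (l.rotate j) ∈ commutatorSpan K (FreeAlgebra K α) := by
  nth_rw 1 [← List.take_append_drop (j % l.length) l]
  rw [List.rotate_eq_drop_append_take_mod, wordBasis_append, wordBasis_append]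
  exact mul_sub_mul_mem_commutatorSpan _ _

section Field

variable {K α : Type*} [Field K]

variable (K) in
def cyclicAverage (l : List α) : FreeAlgebra K α :=
  (l.length : K)⁻¹ • ∑ j ∈ range l.length, wordBasis K α (l.rotate j)

lemma wordBasis_sub_cyclicAverage_mem [CharZero K] {l : List α} (hl : l ≠ []) :
    wordBasis K α l - cyclicAverage K l ∈ commutatorSpan K (FreeAlgebra K α) := by
  have h_len : (l.length : K) ≠ 0 := by simpa using hl
  have h_avg : wordBasis K α l - cyclicAverage K l = (l.length : K)⁻¹ •
      ∑ j ∈ range l.length, (wordBasis K α l - wordBasis K α (l.rotate j)) := by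
    rw [cyclicAverage, sum_sub_distrib, sum_const, card_range, smul_sub,
      ← Nat.cast_smul_eq_nsmul K, smul_smul, inv_mul_cancel₀ h_len, one_smul]
  rw [h_avg]
  exact Submodule.smul_mem _ _ <|
    Submodule.sum_mem _ fun j _ => wordBasis_sub_wordBasis_rotate_mem l j

lemma wordBasis_repr_cyclicAverage [DecidableEq α] (l u : List α) :
    (wordBasis K α).repr (cyclicAverage K l) u = (l.length : K)⁻¹ * l.rotationCount u := by
  simp only [cyclicAverage, map_smul, map_sum, Basis.repr_self, Finsupp.smul_apply,
    Finsupp.coe_finsetSum, Finset.sum_apply, Finsupp.single_apply, sum_boole, smul_eq_mul,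
    List.rotationCount]

lemma mem_commutatorSpan_of_sum_rotationCount_eq_zero [CharZero K] [DecidableEq α]
    {f : FreeAlgebra K α} (h_nil : (wordBasis K α).repr f [] = 0)
    (h_rot : ∀ u ≠ [], ((wordBasis K α).repr f).sum (fun l a => a * u.rotationCount l) = 0) :
    f ∈ commutatorSpan K (FreeAlgebra K α) := by
  set b := wordBasis K α
  set c := b.repr f
  have h_avg : c.sum (fun l a => a • cyclicAverage K l) = 0 := by
    refine b.ext_elem_iff.2 fun u => ?_
    calc b.repr (c.sum fun l a => a • cyclicAverage K l) u
        = c.sum (fun l a => a * ((l.length : K)⁻¹ * l.rotationCount u)) := by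
          simp only [Finsupp.sum, map_sum, map_smul, Finsupp.coe_finsetSum, Finset.sum_apply,
            Finsupp.smul_apply, smul_eq_mul, b, wordBasis_repr_cyclicAverage]
      _ = (u.length : K)⁻¹ * c.sum (fun l a => a * u.rotationCount l) := by
          rw [Finsupp.mul_sum]
          refine Finsupp.sum_congr fun l _ => ?_
          by_cases h : l.length = u.length
          · rw [h, List.rotationCount_comm]
            ring
          · simp [List.rotationCount_eq_zero_of_length_ne h,
              List.rotationCount_eq_zero_of_length_ne (Ne.symm h)]
      _ = b.repr 0 u := by
          rcases eq_or_ne u [] with rfl | hu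
          · simp
          · simp [h_rot u hu]
  have h_split : f = c.sum (fun l a => a • (b l - cyclicAverage K l)) +
      c.sum (fun l a => a • cyclicAverage K l) := by
    rw [← Finsupp.sum_add]
    simp only [smul_sub, sub_add_cancel]
    exact (b.linearCombination_repr f).symm
  rw [h_split, h_avg, add_zero]
  refine Submodule.finsuppSum_mem _ _ _ _ fun l hl => Submodule.smul_mem _ _ ?_
  rcases eq_or_ne l [] with rfl | hl_ne
  · exact absurd h_nil hl
  · exact wordBasis_sub_cyclicAverage_mem hl_ne

open Polynomial in
lemma trace_lift_homogeneous_eq_zero [Infinite K] {n : Type*} [Fintype n]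
    [DecidableEq n] (M : α → Matrix n n K) {f : FreeAlgebra K α}
    (h : ∀ s : K, trace (lift K (s • M) f) = 0) (k : ℕ) :
    ((wordBasis K α).repr f).sum
      (fun l a => if l.length = k then a * trace (lift K M (wordBasis K α l)) else 0) = 0 := by
  set c := (wordBasis K α).repr f
  let q : K[X] := c.sum fun l a => C (a * trace (lift K M (wordBasis K α l))) * X ^ l.length
  have hq : q = 0 := Polynomial.funext fun s => by
    rw [eval_zero, ← h s, trace_lift_eq_finsuppSum]
    simp only [q, c, Finsupp.sum, eval_finsetSum, eval_mul, eval_C, eval_pow, eval_X,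
      lift_smul_wordBasis, trace_smul, smul_eq_mul]
    exact sum_congr rfl fun l _ => by ring
  have hk := congrArg (coeff · k) hq
  simp only [q, Finsupp.sum, finsetSum_coeff, coeff_C_mul_X_pow, coeff_zero] at hk
  simpa only [Finsupp.sum, eq_comm (a := k)] using hk

lemma wordBasis_repr_nil_eq_zero_of_trace_lift [Infinite K] {f : FreeAlgebra K α}
    (h : ∀ M : α → Matrix (Fin 1) (Fin 1) K, trace (lift K M f) = 0) :
    (wordBasis K α).repr f [] = 0 := by
  classical
  simpa [List.length_eq_zero_iff, Finsupp.sum_ite_eq', wordBasis_apply] using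
    trace_lift_homogeneous_eq_zero 0 (fun s => h _) 0

lemma finsuppSum_rotationCount_eq_zero_of_trace_lift [Infinite K] [DecidableEq α]
    {f : FreeAlgebra K α} (u : List α)
    (h : ∀ M : α → Matrix (Fin u.length) (Fin u.length) K, trace (lift K M f) = 0) :
    ((wordBasis K α).repr f).sum (fun l a => a * u.rotationCount l) = 0 := by
  rw [← trace_lift_homogeneous_eq_zero (labelMatrix K u.get (finRotate u.length))
    (fun s => h _) u.length]
  refine Finsupp.sum_congr fun l _ => ?_
  split_ifs with hl
  · rw [lift_wordBasis, trace_prod_map_labelMatrix_get_finRotate u l hl]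
  · rw [List.rotationCount_eq_zero_of_length_ne (Ne.symm hl), Nat.cast_zero, mul_zero]

theorem mem_commutatorSpan_of_trace_lift_eq_zero [CharZero K] {f : FreeAlgebra K α}
    (h : ∀ n : ℕ, 1 ≤ n → ∀ M : α → Matrix (Fin n) (Fin n) K, trace (lift K M f) = 0) :
    f ∈ commutatorSpan K (FreeAlgebra K α) := by
  classical
  exact mem_commutatorSpan_of_sum_rotationCount_eq_zero
    (wordBasis_repr_nil_eq_zero_of_trace_lift (h 1 le_rfl))
    fun u hu => finsuppSum_rotationCount_eq_zero_of_trace_lift u (h _ (List.length_pos_iff.2 hu))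

end Field

end FreeAlgebra

theorem ginzburg_stabilized_trace_injective (f : FreeAlgebra ℂ (Fin 2))
    (h : ∀ n : ℕ, 1 ≤ n → ∀ X Y : Matrix (Fin n) (Fin n) ℂ,
      Matrix.trace (evalM X Y f) = 0) :
    f ∈ commSpan := by
  refine FreeAlgebra.mem_commutatorSpan_of_trace_lift_eq_zero fun n hn M => ?_
  have hM : ![M 0, M 1] = M := by
    ext i : 1
    fin_cases i <;> rfl
  simpa [evalM, hM] using h n hn (M 0) (M 1)
end
end
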